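/- Let M = {(1,1), (1,−1), (−1,1), (−1,−1), (2,2), (2,−2), (−2,2), (−2,−2)} ⊂ ℝ², g = ((α/2)|·|₂² + δ_M)** for α > 0, and g* its Fenchel conjugate. Then for every q ∈ ℝ², ∂g*(q) = (sign(q₁), sign(q₂)) · λ(q), where sign denotes the set-valued sign (sign(0) = [−1,1]) applied componentwise, and λ(q) = {1} if |q|₁ < 3α, λ(q) = {2} if |q|₁ > 3α, and λ(q) = [1,2] if |q|₁ = 3α; i.e., ∂g*(q) = {(s₁ t, s₂ t) : s₁ ∈ sign(q₁), s₂ ∈ sign(q₂), t ∈ λ(q)}. -/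

import Mathlib

/-!
Since a conjugate is its own triple conjugate, `g* = ((α/2)|·|² + δ_M)*`, and maximizing
`⟪q, v⟫ - (α/2)|v|²` over each ring `|v₁| = |v₂| = r ∈ {1, 2}` of `M` gives `r |q|₁ - α r²`;
hence `g*(q) = φ(|q|₁)` with `φ(s) = max (s - α) (2s - 4α)`.

For any profile `φ`, `p ∈ ∂(φ ∘ |·|₁)(q)` holds exactly when some `t` is a subgradient of `φ`
at `|q|₁` relative to `[0, ∞)` with `|pᵢ| ≤ t` and `pᵢ qᵢ = t |qᵢ|` for all `i`: testing the
subgradient inequality on points of an `ℓ¹`-sphere where `⟪p, ·⟫` attains `|p|_∞` shows that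
`t = |p|_∞` works. The last two conditions say `pᵢ ∈ t · sign(qᵢ)`, and for `|q|₁ > 0` the
relative subgradients of `φ` at `|q|₁` are exactly `λ(q)`.
-/

open MeasureTheory Set Filter Topology

noncomputable section

abbrev Vec (k : ℕ) := EuclideanSpace ℝ (Fin k)

/-- The Fenchel (Legendre–Fenchel) conjugate of an extended-real-valued function on a
real inner product space. -/
def EConj {X : Type*} [NormedAddCommGroup X] [InnerProductSpace ℝ X]
    (f : X → EReal) (p : X) : EReal :=
  ⨆ v, ((inner ℝ p v : ℝ) : EReal) - f v

/-- The convex subdifferential of an extended-real-valued function on a real inner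
product space. -/
def ESubdiff {X : Type*} [NormedAddCommGroup X] [InnerProductSpace ℝ X]
    (f : X → EReal) (u : X) : Set X :=
  {p | ∀ v, f u + ((inner ℝ p (v - u) : ℝ) : EReal) ≤ f v}

/-- The vector `(a, b) ∈ ℝ²`. -/
def mk2 (a b : ℝ) : Vec 2 := WithLp.toLp 2 ![a, b]

/-- The concentric-corners admissible set
`M = {(±1,±1), (±2,±2)} ⊂ ℝ²`. -/
def Mconc : Set (Vec 2) :=
  {mk2 1 1, mk2 1 (-1), mk2 (-1) 1, mk2 (-1) (-1),
   mk2 2 2, mk2 2 (-2), mk2 (-2) 2, mk2 (-2) (-2)}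

open Classical in
/-- The multibang penalty `g = ((α/2)|·|₂² + δ_M)**` for the concentric-corners set. -/
def gConc (α : ℝ) : Vec 2 → EReal :=
  EConj (EConj (fun v => if v ∈ Mconc then ((α/2 * ‖v‖^2 : ℝ) : EReal) else ⊤))

/-- The set-valued sign of convex analysis: `{1}` for `t > 0`, `{−1}` for `t < 0`,
`[−1,1]` for `t = 0`. -/
def signSet (t : ℝ) : Set ℝ :=
  if 0 < t then {1} else if t < 0 then {-1} else Set.Icc (-1) 1

/-- The magnitude factor `λ(q)`: `{1}` for `|q|₁ < 3α`, `{2}` for `|q|₁ > 3α`, and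
`[1,2]` for `|q|₁ = 3α`. -/
def lamSet (α : ℝ) (q : Vec 2) : Set ℝ :=
  if |q 0| + |q 1| < 3*α then {1} else if 3*α < |q 0| + |q 1| then {2} else Set.Icc 1 2

open scoped RealInnerProductSpace

theorem EReal.coe_sub_le_of_coe_sub_le {c : ℝ} {a b : EReal} (h : (c : EReal) - a ≤ b) :
    (c : EReal) - b ≤ a := by
  induction a using EReal.rec with
  | bot => simp_all
  | top => exact le_top
  | coe x =>
    induction b using EReal.rec with
    | bot => exact absurd h (by simp [← EReal.coe_sub])
    | top => simp
    | coe y => exact_mod_cast (by linarith [(by exact_mod_cast h : c - x ≤ y)] : c - y ≤ x)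

section Conjugate

variable {X : Type*} [NormedAddCommGroup X] [InnerProductSpace ℝ X]

theorem eConj_anti {f g : X → EReal} (h : ∀ v, f v ≤ g v) (p : X) : EConj g p ≤ EConj f p :=
  iSup_mono fun v => EReal.sub_le_sub le_rfl (h v)

theorem eConj_eConj_le (f : X → EReal) (v : X) : EConj (EConj f) v ≤ f v :=
  iSup_le fun p => by
    rw [real_inner_comm]
    exact EReal.coe_sub_le_of_coe_sub_le (le_iSup (fun w => ((⟪p, w⟫ : ℝ) : EReal) - f w) v)

theorem eConj_eConj_eConj (f : X → EReal) : EConj (EConj (EConj f)) = EConj f :=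
  funext fun p => le_antisymm (eConj_eConj_le (EConj f) p) (eConj_anti (eConj_eConj_le f) p)

theorem mem_eSubdiff_coe_iff {F : X → ℝ} {u p : X} :
    p ∈ ESubdiff (fun x => (F x : EReal)) u ↔ ∀ v, F u + ⟪p, v - u⟫ ≤ F v :=
  forall_congr' fun v => by rw [← EReal.coe_add, EReal.coe_le_coe_iff]

end Conjugate

theorem exists_abs_eq_one_mul_eq_abs (x : ℝ) : ∃ c : ℝ, |c| = 1 ∧ c * x = |x| := by
  rcases le_or_gt 0 x with hx | hx
  · exact ⟨1, abs_one, by rw [one_mul, abs_of_nonneg hx]⟩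
  · exact ⟨-1, by simp, by rw [abs_of_neg hx]; ring⟩

namespace EuclideanSpace

variable {ι : Type*} [Fintype ι]

theorem real_inner_eq_sum (x y : EuclideanSpace ℝ ι) : ⟪x, y⟫ = ∑ i, x i * y i := by
  simp [PiLp.inner_apply, mul_comm]

theorem real_inner_le_mul_sum_abs {p : EuclideanSpace ℝ ι} {t : ℝ}
    (hp : ∀ i, |p i| ≤ t) (v : EuclideanSpace ℝ ι) : ⟪p, v⟫ ≤ t * ∑ i, |v i| := by
  rw [real_inner_eq_sum, Finset.mul_sum]
  refine Finset.sum_le_sum fun i _ => ?_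
  calc p i * v i ≤ |p i| * |v i| := by rw [← abs_mul]; exact le_abs_self _
    _ ≤ t * |v i| := mul_le_mul_of_nonneg_right (hp i) (abs_nonneg _)

theorem exists_abs_eq_real_inner_eq (q : EuclideanSpace ℝ ι) (r : ℝ) :
    ∃ v : EuclideanSpace ℝ ι, (∀ i, |v i| = |r|) ∧ ⟪q, v⟫ = r * ∑ i, |q i| := by
  choose c hc hcq using fun i => exists_abs_eq_one_mul_eq_abs (q i)
  refine ⟨WithLp.toLp 2 fun i => r * c i, fun i => by simp [abs_mul, hc], ?_⟩
  rw [real_inner_eq_sum, Finset.mul_sum]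
  exact Finset.sum_congr rfl fun i _ => by rw [← hcq i, PiLp.toLp_apply]; ring

theorem exists_forall_abs_le_real_inner_eq [Nonempty ι] (p : EuclideanSpace ℝ ι) :
    ∃ m, (∀ i, |p i| ≤ m) ∧
      ∀ s ≥ 0, ∃ v : EuclideanSpace ℝ ι, ∑ i, |v i| = s ∧ ⟪p, v⟫ = m * s := by
  classical
  obtain ⟨i₀, -, hi₀⟩ := Finset.univ.exists_max_image (fun i => |p i|) Finset.univ_nonempty
  obtain ⟨c, hc, hcp⟩ := exists_abs_eq_one_mul_eq_abs (p i₀)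
  refine ⟨|p i₀|, fun i => hi₀ i (Finset.mem_univ i), fun s hs => ?_⟩
  refine ⟨WithLp.toLp 2 (Pi.single i₀ (c * s)), ?_, ?_⟩
  · simp [Pi.single_apply, apply_ite, abs_mul, hc, abs_of_nonneg hs]
  · simp [real_inner_eq_sum, ← hcp]
    ring

theorem norm_sq_eq_card_mul {v : EuclideanSpace ℝ ι} {r : ℝ} (hv : ∀ i, |v i| = r) :
    ‖v‖ ^ 2 = Fintype.card ι * r ^ 2 := by
  simp [norm_sq_eq, hv]

end EuclideanSpace

theorem mem_eSubdiff_comp_sum_abs_iff {ι : Type*} [Fintype ι] [Nonempty ι] (φ : ℝ → ℝ)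
    (q p : EuclideanSpace ℝ ι) :
    p ∈ ESubdiff (fun x : EuclideanSpace ℝ ι => (φ (∑ i, |x i|) : EReal)) q ↔
      ∃ t, (∀ s ≥ 0, φ (∑ i, |q i|) + t * (s - ∑ i, |q i|) ≤ φ s) ∧
        ∀ i, |p i| ≤ t ∧ p i * q i = t * |q i| := by
  rw [mem_eSubdiff_coe_iff]
  constructor
  · intro hp
    obtain ⟨m, hpm, hv⟩ := EuclideanSpace.exists_forall_abs_le_real_inner_eq p
    have hφ : ∀ s ≥ 0, φ (∑ i, |q i|) + m * s - ⟪p, q⟫ ≤ φ s := fun s hs => by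
      obtain ⟨v, rfl, hpv⟩ := hv s hs
      simpa [inner_sub_right, hpv, add_sub_assoc] using hp v
    have hpq_le := EuclideanSpace.real_inner_le_mul_sum_abs hpm q
    have hpq : ⟪p, q⟫ = m * ∑ i, |q i| := by
      linarith [hφ (∑ i, |q i|) (Finset.sum_nonneg fun i _ => abs_nonneg _)]
    refine ⟨m, fun s hs => by linarith [hφ s hs], fun i => ⟨hpm i, ?_⟩⟩
    rw [EuclideanSpace.real_inner_eq_sum, Finset.mul_sum] at hpq
    refine (Finset.sum_eq_sum_iff_of_le fun j _ => ?_).1 hpq i (Finset.mem_univ i)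
    calc p j * q j ≤ |p j| * |q j| := by rw [← abs_mul]; exact le_abs_self _
      _ ≤ m * |q j| := mul_le_mul_of_nonneg_right (hpm j) (abs_nonneg _)
  · rintro ⟨t, hφ, hpt⟩ v
    have hpq : ⟪p, q⟫ = t * ∑ i, |q i| := by
      simp only [EuclideanSpace.real_inner_eq_sum, Finset.mul_sum, fun i => (hpt i).2]
    have hpv := EuclideanSpace.real_inner_le_mul_sum_abs (fun i => (hpt i).1) v
    rw [inner_sub_right]
    linarith [hφ (∑ i, |v i|) (Finset.sum_nonneg fun i _ => abs_nonneg _)]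

theorem exists_mem_signSet_mul_eq_iff {x y t : ℝ} (ht : 0 < t) :
    (∃ s ∈ signSet x, y = s * t) ↔ |y| ≤ t ∧ y * x = t * |x| := by
  constructor
  · rintro ⟨s, hs, rfl⟩
    unfold signSet at hs
    split_ifs at hs with hx hx'
    · simp_all [abs_of_pos hx, abs_of_pos ht, mul_comm]
    · simp_all [abs_of_neg hx', abs_of_pos ht]
    · obtain rfl : x = 0 := by linarith [not_lt.1 hx, not_lt.1 hx']
      refine ⟨?_, by simp⟩
      rw [abs_mul, abs_of_pos ht]
      exact mul_le_of_le_one_left ht.le (abs_le.2 hs)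
  · rintro ⟨hy, hyx⟩
    refine ⟨y / t, ?_, (div_mul_cancel₀ y ht.ne').symm⟩
    unfold signSet
    split_ifs with hx hx'
    · rw [abs_of_pos hx] at hyx
      simp [mul_right_cancel₀ hx.ne' hyx, ht.ne']
    · rw [abs_of_neg hx', mul_neg, ← neg_mul] at hyx
      simp [mul_right_cancel₀ hx'.ne hyx, ht.ne']
    · exact abs_le.1 (by rw [abs_div, abs_of_pos ht]; exact div_le_one_of_le₀ hy ht.le)

def concProfile (α s : ℝ) : ℝ := max (s - α) (2 * s - 4 * α)

theorem mem_Mconc_iff {v : Vec 2} : v ∈ Mconc ↔ ∃ r ∈ ({1, 2} : Set ℝ), ∀ i, |v i| = r := by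
  constructor
  · intro hv
    simp only [Mconc, Set.mem_insert_iff, Set.mem_singleton_iff] at hv
    rcases hv with rfl | rfl | rfl | rfl | rfl | rfl | rfl | rfl <;>
      simp [Fin.forall_fin_two, mk2]
  · rintro ⟨r, hr, hv⟩
    have hv' : v = mk2 (v 0) (v 1) := by ext i; fin_cases i <;> rfl
    rw [hv']
    simp only [Set.mem_insert_iff, Set.mem_singleton_iff] at hr
    rcases hr with rfl | rfl <;>
      rcases abs_eq (by norm_num) |>.1 (hv 0) with h₀ | h₀ <;>
      rcases abs_eq (by norm_num) |>.1 (hv 1) with h₁ | h₁ <;>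
      simp [Mconc, h₀, h₁]

open Classical in
theorem eConj_gConc (α : ℝ) :
    EConj (gConc α) = fun q : Vec 2 => (concProfile α (∑ i, |q i|) : EReal) := by
  unfold gConc
  rw [eConj_eConj_eConj]
  funext q
  unfold EConj
  apply le_antisymm
  · refine iSup_le fun v => ?_
    dsimp only
    split_ifs with hv
    · obtain ⟨r, hr, hvr⟩ := mem_Mconc_iff.1 hv
      have hqv := EuclideanSpace.real_inner_le_mul_sum_abs (fun i => (hvr i).le) q
      rw [← EReal.coe_sub, EReal.coe_le_coe_iff, real_inner_comm,
        EuclideanSpace.norm_sq_eq_card_mul hvr]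
      simp only [Set.mem_insert_iff, Set.mem_singleton_iff] at hr
      rcases hr with rfl | rfl
      · exact le_max_of_le_left (by norm_num at hqv ⊢; linarith)
      · exact le_max_of_le_right (by norm_num at hqv ⊢; linarith)
    · simp
  · have hring : ∀ r ∈ ({1, 2} : Set ℝ), ((r * ∑ i, |q i| - α * r ^ 2 : ℝ) : EReal) ≤
        ⨆ v, ((⟪q, v⟫ : ℝ) : EReal) - if v ∈ Mconc then ((α / 2 * ‖v‖ ^ 2 : ℝ) : EReal) else ⊤ := by
      intro r hr
      have hr0 : 0 ≤ r := by rcases hr with rfl | rfl <;> norm_num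
      obtain ⟨v, hv, hqv⟩ := EuclideanSpace.exists_abs_eq_real_inner_eq q r
      rw [abs_of_nonneg hr0] at hv
      refine le_trans ?_ (le_iSup _ v)
      rw [if_pos (mem_Mconc_iff.2 ⟨r, hr, hv⟩), ← EReal.coe_sub, EReal.coe_le_coe_iff, hqv,
        EuclideanSpace.norm_sq_eq_card_mul hv]
      simp only [Fintype.card_fin, Nat.cast_ofNat]
      linarith
    rw [concProfile, EReal.coe_strictMono.monotone.map_max]
    refine max_le ?_ ?_
    · convert hring 1 (by simp) using 2; ring
    · convert hring 2 (by simp) using 2; ring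

theorem concProfile_of_le {α s : ℝ} (hs : s ≤ 3 * α) : concProfile α s = s - α :=
  max_eq_left (by linarith)

theorem concProfile_of_ge {α s : ℝ} (hs : 3 * α ≤ s) : concProfile α s = 2 * s - 4 * α :=
  max_eq_right (by linarith)

theorem lamSet_subset_Icc (α : ℝ) (q : Vec 2) : lamSet α q ⊆ Set.Icc 1 2 := by
  unfold lamSet
  split_ifs <;> simp

theorem concProfile_add_mul_le {α t : ℝ} {q : Vec 2} (ht : t ∈ lamSet α q) (s : ℝ) :
    concProfile α (|q 0| + |q 1|) + t * (s - (|q 0| + |q 1|)) ≤ concProfile α s := by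
  obtain ⟨ht₁, ht₂⟩ := lamSet_subset_Icc α q ht
  have hs₁ := le_max_left (s - α) (2 * s - 4 * α)
  have hs₂ := le_max_right (s - α) (2 * s - 4 * α)
  unfold lamSet at ht
  split_ifs at ht with hL hL'
  · obtain rfl := ht
    rw [concProfile_of_le hL.le]
    exact le_trans (by linarith) hs₁
  · obtain rfl := ht
    rw [concProfile_of_ge hL'.le]
    exact le_trans (by linarith) hs₂
  · rw [le_antisymm (not_lt.1 hL') (not_lt.1 hL), concProfile_of_le le_rfl]
    unfold concProfile
    nlinarith

theorem mem_lamSet_of_forall_add_mul_le {α t : ℝ} {q : Vec 2} (hα : 0 < α)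
    (hq : 0 < |q 0| + |q 1|)
    (h : ∀ s ≥ 0, concProfile α (|q 0| + |q 1|) + t * (s - (|q 0| + |q 1|)) ≤ concProfile α s) :
    t ∈ lamSet α q := by
  have h₀ := h 0 le_rfl
  have h₃ := h (3 * α) (by linarith)
  have h₁ := h (|q 0| + |q 1| + 1) (by linarith)
  rw [concProfile_of_le (s := 0) (by linarith)] at h₀
  rw [concProfile_of_le le_rfl] at h₃
  unfold lamSet
  split_ifs with hL hL'
  · rw [concProfile_of_le hL.le] at h₀ h₃
    exact le_antisymm (by nlinarith) (by nlinarith)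
  · rw [concProfile_of_ge hL'.le] at h₃ h₁
    rw [concProfile_of_ge (by linarith)] at h₁
    exact le_antisymm (by nlinarith) (by nlinarith)
  · obtain hL : |q 0| + |q 1| = 3 * α := le_antisymm (not_lt.1 hL') (not_lt.1 hL)
    rw [hL, concProfile_of_le le_rfl] at h₀
    rw [hL, concProfile_of_ge le_rfl, concProfile_of_ge (by linarith)] at h₁
    exact ⟨by nlinarith, by nlinarith⟩

theorem le_one_of_forall_add_mul_le {α t : ℝ} (hα : 0 < α)
    (h : ∀ s ≥ 0, concProfile α 0 + t * (s - 0) ≤ concProfile α s) : t ≤ 1 := by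
  have h₃ := h (3 * α) (by linarith)
  rw [concProfile_of_le (s := 0) (by linarith), concProfile_of_le le_rfl] at h₃
  nlinarith

theorem exists_mem_lamSet_of_forall_add_mul_le {α t : ℝ} {q p : Vec 2} (hα : 0 < α)
    (h : ∀ s ≥ 0, concProfile α (|q 0| + |q 1|) + t * (s - (|q 0| + |q 1|)) ≤ concProfile α s)
    (hp : ∀ i, |p i| ≤ t ∧ p i * q i = t * |q i|) :
    ∃ t' ∈ lamSet α q, ∀ i, |p i| ≤ t' ∧ p i * q i = t' * |q i| := by
  rcases (add_nonneg (abs_nonneg (q 0)) (abs_nonneg (q 1))).eq_or_lt with hq | hq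
  · -- at `q = 0` the subgradient data only give `t ≤ 1`, and `t = 1` serves as well
    have hq₀ : q 0 = 0 := abs_eq_zero.1 (by linarith [abs_nonneg (q 0), abs_nonneg (q 1)])
    have hq₁ : q 1 = 0 := abs_eq_zero.1 (by linarith [abs_nonneg (q 0), abs_nonneg (q 1)])
    simp only [hq₀, hq₁, abs_zero, add_zero] at h
    have ht := le_one_of_forall_add_mul_le hα h
    refine ⟨1, by simp [lamSet, hq₀, hq₁, hα], Fin.forall_fin_two.2 ⟨?_, ?_⟩⟩
    · exact ⟨(hp 0).1.trans ht, by simp [hq₀]⟩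
    · exact ⟨(hp 1).1.trans ht, by simp [hq₁]⟩
  · exact ⟨t, mem_lamSet_of_forall_add_mul_le hα hq h, hp⟩

/-- subdifferential of the conjugate, concentric corners: for
`M = {(±1,±1), (±2,±2)}` and `g = ((α/2)|·|₂² + δ_M)**`, the subdifferential of `g*` is
`∂g*(q) = (sign(q₁), sign(q₂)) · λ(q)` with the set-valued sign and the magnitude set
`λ(q)` as above. -/
theorem subdifferential_conjugate_concentric (α : ℝ) (hα : 0 < α) :
    ∀ q : Vec 2,
      ESubdiff (EConj (gConc α)) q =
        {v : Vec 2 | ∃ s₁ ∈ signSet (q 0), ∃ s₂ ∈ signSet (q 1), ∃ t ∈ lamSet α q,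
          v = mk2 (s₁ * t) (s₂ * t)} := by
  intro q
  ext p
  have hpos : ∀ t ∈ lamSet α q, 0 < t := fun t ht => by linarith [(lamSet_subset_Icc α q ht).1]
  rw [eConj_gConc, mem_eSubdiff_comp_sum_abs_iff, Fin.sum_univ_two]
  constructor
  · rintro ⟨t, hφ, hp⟩
    obtain ⟨t, ht, hp⟩ := exists_mem_lamSet_of_forall_add_mul_le hα hφ hp
    obtain ⟨s₁, hs₁, hps₁⟩ := (exists_mem_signSet_mul_eq_iff (hpos t ht)).2 (hp 0)
    obtain ⟨s₂, hs₂, hps₂⟩ := (exists_mem_signSet_mul_eq_iff (hpos t ht)).2 (hp 1)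
    exact ⟨s₁, hs₁, s₂, hs₂, t, ht, by ext i; fin_cases i <;> simp [mk2, hps₁, hps₂]⟩
  · rintro ⟨s₁, hs₁, s₂, hs₂, t, ht, rfl⟩
    refine ⟨t, fun s _ => concProfile_add_mul_le ht s, Fin.forall_fin_two.2 ⟨?_, ?_⟩⟩
    · exact (exists_mem_signSet_mul_eq_iff (hpos t ht)).1 ⟨s₁, hs₁, rfl⟩
    · exact (exists_mem_signSet_mul_eq_iff (hpos t ht)).1 ⟨s₂, hs₂, rfl⟩
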